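/- For every k ∈ F with k ≠ 0 and every matrix ρ ∈ Matrix F F ℂ: ∑_{j ∈ F} Ẑ_{j*k} * ρ * Ẑ_{j*k} = 2^n • ∑_{l ∈ F} ρ_{l,l} • E_{l,l}; that is, averaging ρ over conjugation by the phase operators Ẑ_{j*k} (j ranging over F) yields the diagonal part of ρ. -/

import Mathlib

variable {n : ℕ} [NeZero n] {F : Type*} [Field F] [Fintype F] [DecidableEq F]
  [Algebra (ZMod 2) F]

/-- The phase operator `Ẑ_a`: the diagonal matrix with `(Ẑ_a)_{k,k} = (-1)^{(k*a)_0}`. -/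
noncomputable def phaseZ (b : Module.Basis (Fin n) (ZMod 2) F) (a : F) : Matrix F F ℂ :=
  Matrix.diagonal fun k => (-1 : ℂ) ^ ((b.repr (k * a)) 0).val

lemma chi_add (b : Module.Basis (Fin n) (ZMod 2) F) (x y : F) :
    (-1 : ℂ) ^ ((b.repr (x + y)) 0).val
      = (-1 : ℂ) ^ ((b.repr x) 0).val * (-1 : ℂ) ^ ((b.repr y) 0).val := by
  rw [map_add, Finsupp.add_apply]
  generalize (b.repr x) 0 = a
  generalize (b.repr y) 0 = c
  rw [ZMod.val_add, ← neg_one_pow_eq_pow_mod_two, pow_add]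

lemma sum_chi (b : Module.Basis (Fin n) (ZMod 2) F) :
    ∑ x : F, (-1 : ℂ) ^ ((b.repr x) 0).val = 0 := by
  have hv : ((1 : ZMod 2)).val = 1 := rfl
  have h0 : (-1 : ℂ) ^ ((b.repr (b 0)) 0).val = -1 := by
    simp [Module.Basis.repr_self, hv]
  have h : ∑ x : F, (-1 : ℂ) ^ ((b.repr x) 0).val
      = ∑ x : F, (-1 : ℂ) ^ ((b.repr (x + b 0)) 0).val :=
    (Fintype.sum_equiv (Equiv.addRight (b 0)) _ _ (fun x => rfl)).symm
  have h2 : ∑ x : F, (-1 : ℂ) ^ ((b.repr (x + b 0)) 0).val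
      = -∑ x : F, (-1 : ℂ) ^ ((b.repr x) 0).val := by
    rw [← Finset.sum_neg_distrib]
    exact Finset.sum_congr rfl fun x _ => by rw [chi_add b x (b 0), h0]; ring
  exact add_self_eq_zero.mp (eq_neg_iff_add_eq_zero.mp (h.trans h2))

lemma sum_chi_mul (b : Module.Basis (Fin n) (ZMod 2) F) {c : F} (hc : c ≠ 0) :
    ∑ j : F, (-1 : ℂ) ^ ((b.repr (j * c)) 0).val = 0 :=
  (Equiv.sum_comp (Equiv.mulRight₀ c hc)
    fun x => (-1 : ℂ) ^ ((b.repr x) 0).val).trans (sum_chi b)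

/-- For every `k ∈ F` with `k ≠ 0` and every matrix `ρ`:
`∑_{j ∈ F} Ẑ_{j*k} * ρ * Ẑ_{j*k} = 2^n • ∑_{l ∈ F} ρ_{l,l} • E_{l,l}`;
i.e. averaging `ρ` over conjugation by the phase operators `Ẑ_{j*k}` yields the
diagonal part of `ρ`. -/
theorem stmt_6 (hF : Fintype.card F = 2 ^ n) (b : Module.Basis (Fin n) (ZMod 2) F)
    (k : F) (hk : k ≠ 0) (ρ : Matrix F F ℂ) :
    ∑ j : F, phaseZ b (j * k) * ρ * phaseZ b (j * k) =
      ((2 : ℂ) ^ n) • ∑ l : F, ρ l l • Matrix.single l l (1 : ℂ) := by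
  have h2F : (2 : F) = 0 := by
    have := map_natCast (algebraMap (ZMod 2) F) 2
    rw [show ((2 : ℕ) : ZMod 2) = 0 by decide, map_zero] at this
    exact_mod_cast this.symm
  ext l m
  simp only [Matrix.sum_apply, phaseZ, Matrix.diagonal_mul, Matrix.mul_diagonal,
    Matrix.smul_apply, smul_eq_mul]
  by_cases hlm : l = m
  · subst hlm
    have hterm : ∀ j : F,
        (-1 : ℂ) ^ ((b.repr (l * (j * k))) 0).val * ρ l l
          * (-1 : ℂ) ^ ((b.repr (l * (j * k))) 0).val = ρ l l := fun j => by
      rw [mul_right_comm, ← pow_add]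
      rw [Even.neg_one_pow ⟨_, rfl⟩, one_mul]
    rw [Finset.sum_congr rfl fun j _ => hterm j, Finset.sum_const, Finset.card_univ, hF]
    simp [Matrix.single, Finset.sum_ite_eq, mul_comm]
  · have hc : (l + m) * k ≠ 0 := by
      refine mul_ne_zero (fun h0 => hlm ?_) hk
      have hmm : m + m = 0 := by rw [← two_mul, h2F, zero_mul]
      have : l = -m := eq_neg_of_add_eq_zero_left h0
      rw [this, neg_eq_iff_add_eq_zero]; linear_combination hmm
    have hterm : ∀ j : F,
        (-1 : ℂ) ^ ((b.repr (l * (j * k))) 0).val * ρ l m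
          * (-1 : ℂ) ^ ((b.repr (m * (j * k))) 0).val
          = (-1 : ℂ) ^ ((b.repr (j * ((l + m) * k))) 0).val * ρ l m := fun j => by
      have := chi_add b (l * (j * k)) (m * (j * k))
      rw [show l * (j * k) + m * (j * k) = j * ((l + m) * k) by ring] at this
      rw [mul_right_comm, ← this]
    rw [Finset.sum_congr rfl fun j _ => hterm j, ← Finset.sum_mul, sum_chi_mul b hc,
      zero_mul]
    simp [Matrix.single, hlm]
    exact Finset.sum_eq_zero fun x _ => if_neg (by rintro ⟨rfl, rfl⟩; exact hlm rfl)
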